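/- arXiv:math/0610148 — 2 statements merged into one kernel-verified Lean document; each statement's English description precedes it below -/
import Mathlib

section
/- Let d ≥ 1 and let (τ, v, η, ζ) : ℝ² → ℝ × ℝ × ℝ^d × ℝ^d be a C¹ solution of the augmented system ∂ₜτ + v∂ₛτ = τ∂ₛv, ∂ₜv + v∂ₛv = τ∂ₛτ, ∂ₜη + v∂ₛη = −τ∂ₛζ, ∂ₜζ + v∂ₛζ = −τ∂ₛη, and fix ε ∈ {−1, +1}. Assume the characteristic speed (t,s) ↦ v(t,s) + ετ(t,s) is bounded on ℝ² and Lipschitz in s uniformly for t in compact sets. Then for every continuous function f : ℝ × ℝ^d → ℝ and every r ∈ ℝ: if f(v(0,s) − ετ(0,s), η(0,s) + εζ(0,s)) = r for all s ∈ ℝ, then f(v(t,s) − ετ(t,s), η(t,s) + εζ(t,s)) = r for all (t,s) ∈ ℝ². In particular the sets {(τ,v,η,ζ) : (v − ετ)² + |η + εζ|² = 1} are invariant under the flow of the augmented system. -/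
open scoped RealInnerProductSpace

/-- Partial derivative in the first variable `t` of a map on `ℝ × ℝ`. -/
noncomputable def pt {F : Type*} [NormedAddCommGroup F] [NormedSpace ℝ F]
    (X : ℝ × ℝ → F) (p : ℝ × ℝ) : F := deriv (fun t => X (t, p.2)) p.1

/-- Partial derivative in the second variable `s` of a map on `ℝ × ℝ`. -/
noncomputable def ps {F : Type*} [NormedAddCommGroup F] [NormedSpace ℝ F]
    (X : ℝ × ℝ → F) (p : ℝ × ℝ) : F := deriv (fun s => X (p.1, s)) p.2

/-!
Along a characteristic `s = γ(t)`, `γ' = v + ετ`, the chain rule turns the derivative of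
`t ↦ X(t, γ t)` into `∂ₜX + (v + ετ) ∂ₛX`, which vanishes for the Riemann invariants
`X = v − ετ` and `X = η + εζ` by the diagonal form of the system (this uses `ε² = 1`).
Boundedness and the uniform Lipschitz bound of the speed give, by Picard–Lindelöf, a
characteristic through any point `(t, s)` defined on the whole time interval between `0` and `t`;
so the values of the Riemann invariants at `(t, s)` are their values at some point `(0, s₀)`.
-/

open Set

section Calculus

variable {F : Type*} [NormedAddCommGroup F] [NormedSpace ℝ F]

lemma pt_eq_fderiv {X : ℝ × ℝ → F} (hX : Differentiable ℝ X) (p : ℝ × ℝ) :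
    pt X p = fderiv ℝ X p (1, 0) := by
  have hcurve : HasDerivAt (fun t : ℝ => (t, p.2)) ((1 : ℝ), (0 : ℝ)) p.1 :=
    (hasDerivAt_id p.1).prodMk (hasDerivAt_const _ _)
  exact ((hX p).hasFDerivAt.comp_hasDerivAt p.1 hcurve).deriv

lemma ps_eq_fderiv {X : ℝ × ℝ → F} (hX : Differentiable ℝ X) (p : ℝ × ℝ) :
    ps X p = fderiv ℝ X p (0, 1) := by
  have hcurve : HasDerivAt (fun s : ℝ => (p.1, s)) ((0 : ℝ), (1 : ℝ)) p.2 :=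
    (hasDerivAt_const _ _).prodMk (hasDerivAt_id p.2)
  exact ((hX p).hasFDerivAt.comp_hasDerivAt p.2 hcurve).deriv

lemma Differentiable.hasDerivWithinAt_comp_graph {X : ℝ × ℝ → F} (hX : Differentiable ℝ X)
    {γ : ℝ → ℝ} {c t : ℝ} {s : Set ℝ} (hγ : HasDerivWithinAt γ c s t) :
    HasDerivWithinAt (fun u => X (u, γ u)) (pt X (t, γ t) + c • ps X (t, γ t)) s t := by
  have hcurve : HasDerivWithinAt (fun u : ℝ => (u, γ u)) ((1 : ℝ), c) s t :=
    (hasDerivWithinAt_id t s).prodMk hγ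
  refine ((hX (t, γ t)).hasFDerivAt.comp_hasDerivWithinAt t hcurve).congr_deriv ?_
  rw [pt_eq_fderiv hX, ps_eq_fderiv hX, ← map_smul, ← map_add]
  simp

lemma Convex.eq_of_hasDerivWithinAt_zero {g : ℝ → F} {s : Set ℝ} (hs : Convex ℝ s)
    (hg : ∀ t ∈ s, HasDerivWithinAt g 0 s t) {x y : ℝ} (hx : x ∈ s) (hy : y ∈ s) :
    g x = g y := by
  have := hs.norm_image_sub_le_of_norm_hasDerivWithin_le hg (fun _ _ => norm_zero.le) hy hx
  rwa [zero_mul, norm_le_zero_iff, sub_eq_zero] at this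

end Calculus

theorem exists_hasDerivWithinAt_uIcc {E : Type*} [NormedAddCommGroup E] [NormedSpace ℝ E]
    [CompleteSpace E] {f : ℝ → E → E} {t₀ t₁ : ℝ} {C L : NNReal}
    (hcont : ∀ x, ContinuousOn (f · x) (uIcc t₀ t₁))
    (hbdd : ∀ t ∈ uIcc t₀ t₁, ∀ x, ‖f t x‖ ≤ C)
    (hlip : ∀ t ∈ uIcc t₀ t₁, LipschitzWith L (f t)) (x₀ : E) :
    ∃ γ : ℝ → E, γ t₀ = x₀ ∧
      ∀ t ∈ uIcc t₀ t₁, HasDerivWithinAt γ (f t (γ t)) (uIcc t₀ t₁) t := by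
  have hpl : IsPicardLindelof f (tmin := t₀ ⊓ t₁) (tmax := t₀ ⊔ t₁)
      ⟨t₀, left_mem_uIcc⟩ x₀ (C * nndist t₀ t₁) 0 C L :=
    { lipschitzOnWith := fun t ht => (hlip t ht).lipschitzOnWith
      continuousOn := fun x _ => hcont x
      norm_le := fun t ht x _ => hbdd t ht x
      mul_max_le := by
        have hmax : max (t₀ ⊔ t₁ - t₀) (t₀ - t₀ ⊓ t₁) = dist t₀ t₁ := by
          rw [Real.dist_eq]
          rcases le_total t₀ t₁ with h | h <;> simp [h, abs_of_nonpos, abs_of_nonneg]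
        simp [hmax] }
  exact hpl.exists_eq_forall_mem_Icc_hasDerivWithinAt₀

section AugmentedSystem

variable {F : Type*} [NormedAddCommGroup F] [NormedSpace ℝ F]
  {τ v : ℝ × ℝ → ℝ} {η ζ : ℝ × ℝ → F} {ε : ℝ}

lemma transport_v_sub_mul_τ {p : ℝ × ℝ} (h1 : pt τ p + v p * ps τ p = τ p * ps v p)
    (h2 : pt v p + v p * ps v p = τ p * ps τ p) (hε : ε * ε = 1) :
    pt v p + (v p + ε * τ p) • ps v p - ε * (pt τ p + (v p + ε * τ p) • ps τ p) = 0 := by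
  simp only [smul_eq_mul]
  linear_combination h2 - ε * h1 - τ p * ps τ p * hε

lemma transport_η_add_smul_ζ {p : ℝ × ℝ} (h3 : pt η p + v p • ps η p = -(τ p) • ps ζ p)
    (h4 : pt ζ p + v p • ps ζ p = -(τ p) • ps η p) (hε : ε * ε = 1) :
    pt η p + (v p + ε * τ p) • ps η p + ε • (pt ζ p + (v p + ε * τ p) • ps ζ p) = 0 := by
  rw [eq_sub_of_add_eq h3, eq_sub_of_add_eq h4]
  match_scalars
  · linear_combination τ p * hε
  · ring

lemma riemann_invariants_eq_of_characteristic (hτ : Differentiable ℝ τ)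
    (hv : Differentiable ℝ v) (hη : Differentiable ℝ η) (hζ : Differentiable ℝ ζ)
    (h1 : ∀ p, pt τ p + v p * ps τ p = τ p * ps v p)
    (h2 : ∀ p, pt v p + v p * ps v p = τ p * ps τ p)
    (h3 : ∀ p, pt η p + v p • ps η p = -(τ p) • ps ζ p)
    (h4 : ∀ p, pt ζ p + v p • ps ζ p = -(τ p) • ps η p) (hε : ε * ε = 1)
    {γ : ℝ → ℝ} {t₀ t₁ : ℝ}
    (hγ : ∀ t ∈ uIcc t₀ t₁, HasDerivWithinAt γ (v (t, γ t) + ε * τ (t, γ t)) (uIcc t₀ t₁) t) :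
    v (t₀, γ t₀) - ε * τ (t₀, γ t₀) = v (t₁, γ t₁) - ε * τ (t₁, γ t₁) ∧
      η (t₀, γ t₀) + ε • ζ (t₀, γ t₀) = η (t₁, γ t₁) + ε • ζ (t₁, γ t₁) := by
  constructor
  · refine (convex_uIcc t₀ t₁).eq_of_hasDerivWithinAt_zero
      (g := fun u => v (u, γ u) - ε * τ (u, γ u)) (fun t ht => ?_) left_mem_uIcc right_mem_uIcc
    have := (hv.hasDerivWithinAt_comp_graph (hγ t ht)).sub
      ((hτ.hasDerivWithinAt_comp_graph (hγ t ht)).const_mul ε)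
    rwa [transport_v_sub_mul_τ (h1 _) (h2 _) hε] at this
  · refine (convex_uIcc t₀ t₁).eq_of_hasDerivWithinAt_zero
      (g := fun u => η (u, γ u) + ε • ζ (u, γ u)) (fun t ht => ?_) left_mem_uIcc right_mem_uIcc
    have := (hη.hasDerivWithinAt_comp_graph (hγ t ht)).add
      ((hζ.hasDerivWithinAt_comp_graph (hγ t ht)).const_smul ε)
    rwa [transport_η_add_smul_ζ (h3 _) (h4 _) hε] at this

end AugmentedSystem

theorem statement13_general (d : ℕ)
    (τ v : ℝ × ℝ → ℝ) (η ζ : ℝ × ℝ → EuclideanSpace ℝ (Fin d))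
    (hτ : ContDiff ℝ 1 τ) (hv : ContDiff ℝ 1 v)
    (hη : ContDiff ℝ 1 η) (hζ : ContDiff ℝ 1 ζ)
    (h1 : ∀ p : ℝ × ℝ, pt τ p + v p * ps τ p = τ p * ps v p)
    (h2 : ∀ p : ℝ × ℝ, pt v p + v p * ps v p = τ p * ps τ p)
    (h3 : ∀ p : ℝ × ℝ, pt η p + v p • ps η p = -(τ p) • ps ζ p)
    (h4 : ∀ p : ℝ × ℝ, pt ζ p + v p • ps ζ p = -(τ p) • ps η p)
    (ε : ℝ) (hε : ε ∈ ({-1, 1} : Set ℝ))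
    (hbdd : ∃ C : ℝ, ∀ p : ℝ × ℝ, |v p + ε * τ p| ≤ C)
    (hlip : ∀ K : Set ℝ, IsCompact K → ∃ L : NNReal, ∀ t ∈ K,
      LipschitzWith L (fun s => v (t, s) + ε * τ (t, s))) :
    (∀ (f : ℝ × EuclideanSpace ℝ (Fin d) → ℝ), Continuous f → ∀ r : ℝ,
      (∀ s : ℝ, f (v (0, s) - ε * τ (0, s), η (0, s) + ε • ζ (0, s)) = r) →
      ∀ p : ℝ × ℝ, f (v p - ε * τ p, η p + ε • ζ p) = r) ∧
    ((∀ s : ℝ, (v (0, s) - ε * τ (0, s)) ^ 2 + ‖η (0, s) + ε • ζ (0, s)‖ ^ 2 = 1) →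
      ∀ p : ℝ × ℝ, (v p - ε * τ p) ^ 2 + ‖η p + ε • ζ p‖ ^ 2 = 1) := by
  have hεε : ε * ε = 1 := by rcases hε with rfl | rfl <;> norm_num
  obtain ⟨C, hC⟩ := hbdd
  have hvc := hv.continuous
  have hτc := hτ.continuous
  have hchar : ∀ p : ℝ × ℝ, ∃ s₀ : ℝ, v p - ε * τ p = v (0, s₀) - ε * τ (0, s₀) ∧
      η p + ε • ζ p = η (0, s₀) + ε • ζ (0, s₀) := by
    rintro ⟨t, s⟩
    obtain ⟨L, hL⟩ := hlip (uIcc t 0) isCompact_uIcc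
    obtain ⟨γ, rfl, hγ⟩ := exists_hasDerivWithinAt_uIcc
      (f := fun t s => v (t, s) + ε * τ (t, s)) (C := C.toNNReal)
      (fun s => by fun_prop) (fun t _ s => (hC (t, s)).trans (Real.le_coe_toNNReal C)) hL s
    exact ⟨γ 0, riemann_invariants_eq_of_characteristic (hτ.differentiable one_ne_zero)
      (hv.differentiable one_ne_zero) (hη.differentiable one_ne_zero)
      (hζ.differentiable one_ne_zero) h1 h2 h3 h4 hεε hγ⟩
  refine ⟨fun f _ r h0 p => ?_, fun h0 p => ?_⟩ <;>
  · obtain ⟨s₀, hw, hz⟩ := hchar p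
    rw [hw, hz]
    exact h0 s₀

/-- Invariance of the level sets `f(v - ετ, η + εζ) = r` under the flow of the
augmented system: if the characteristic speed `v + ετ` is bounded and Lipschitz in
`s` uniformly for `t` in compact sets, then any relation
`f(v - ετ, η + εζ) = r` holding at `t = 0` holds for all time. In particular the
sets `{(v - ετ)² + |η + εζ|² = 1}` are invariant. -/
theorem statement13 (d : ℕ) (hd : 1 ≤ d)
    (τ v : ℝ × ℝ → ℝ) (η ζ : ℝ × ℝ → EuclideanSpace ℝ (Fin d))
    (hτ : ContDiff ℝ 1 τ) (hv : ContDiff ℝ 1 v)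
    (hη : ContDiff ℝ 1 η) (hζ : ContDiff ℝ 1 ζ)
    (h1 : ∀ p : ℝ × ℝ, pt τ p + v p * ps τ p = τ p * ps v p)
    (h2 : ∀ p : ℝ × ℝ, pt v p + v p * ps v p = τ p * ps τ p)
    (h3 : ∀ p : ℝ × ℝ, pt η p + v p • ps η p = -(τ p) • ps ζ p)
    (h4 : ∀ p : ℝ × ℝ, pt ζ p + v p • ps ζ p = -(τ p) • ps η p)
    (ε : ℝ) (hε : ε ∈ ({-1, 1} : Set ℝ))
    (hbdd : ∃ C : ℝ, ∀ p : ℝ × ℝ, |v p + ε * τ p| ≤ C)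
    (hlip : ∀ K : Set ℝ, IsCompact K → ∃ L : NNReal, ∀ t ∈ K,
      LipschitzWith L (fun s => v (t, s) + ε * τ (t, s))) :
    (∀ (f : ℝ × EuclideanSpace ℝ (Fin d) → ℝ), Continuous f → ∀ r : ℝ,
      (∀ s : ℝ, f (v (0, s) - ε * τ (0, s), η (0, s) + ε • ζ (0, s)) = r) →
      ∀ p : ℝ × ℝ, f (v p - ε * τ p, η p + ε • ζ p) = r) ∧
    ((∀ s : ℝ, (v (0, s) - ε * τ (0, s)) ^ 2 + ‖η (0, s) + ε • ζ (0, s)‖ ^ 2 = 1) →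
      ∀ p : ℝ × ℝ, (v p - ε * τ p) ^ 2 + ‖η p + ε • ζ p‖ ^ 2 = 1) :=
  statement13_general d τ v η ζ hτ hv hη hζ h1 h2 h3 h4 ε hε hbdd hlip
end

section
/- Let d ≥ 1 and δ > 0. Let (τ, v, η, ζ) : ℝ² → ℝ × ℝ × ℝ^d × ℝ^d be a C¹ solution of the augmented system ∂ₜτ + v∂ₛτ = τ∂ₛv, ∂ₜv + v∂ₛv = τ∂ₛτ, ∂ₜη + v∂ₛη = −τ∂ₛζ, ∂ₜζ + v∂ₛζ = −τ∂ₛη with τ(t,s) ≥ δ for all (t,s). Suppose ξ : ℝ² → ℝ is a C² function of (t,y) satisfying ∂_yξ(t,y) = τ(t, ξ(t,y)) and ∂ₜξ(t,y) = v(t, ξ(t,y)) for all (t,y) ∈ ℝ². Then ξ satisfies the linear wave equation ∂ₜₜξ = ∂_yyξ on ℝ². -/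
open scoped RealInnerProductSpace

/-!
Differentiating `∂ₜξ(t,y) = v(t, ξ(t,y))` in `t` by the chain rule gives
`∂ₜₜξ = ∂ₜv + v ∂ₛv` at `(t, ξ(t,y))`, and differentiating `∂_yξ(t,y) = τ(t, ξ(t,y))` in `y`
gives `∂_yyξ = τ ∂ₛτ` there. The second equation of the system says exactly that these agree.
-/

section PartialDerivatives

variable {F : Type*} [NormedAddCommGroup F] [NormedSpace ℝ F] {f : ℝ × ℝ → F}

theorem hasDerivAt_pt {p : ℝ × ℝ} (hf : DifferentiableAt ℝ f p) :
    HasDerivAt (fun t => f (t, p.2)) (pt f p) p.1 :=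
  (hf.comp p.1 ((differentiableAt_id).prodMk (differentiableAt_const p.2))).hasDerivAt

theorem hasDerivAt_ps {p : ℝ × ℝ} (hf : DifferentiableAt ℝ f p) :
    HasDerivAt (fun s => f (p.1, s)) (ps f p) p.2 :=
  (hf.comp p.2 ((differentiableAt_const p.1).prodMk differentiableAt_id)).hasDerivAt

theorem pt_eq_fderiv_s14 {p : ℝ × ℝ} (hf : DifferentiableAt ℝ f p) :
    pt f p = fderiv ℝ f p (1, 0) := by
  have h := hf.hasFDerivAt.comp_hasDerivAt p.1 ((hasDerivAt_id p.1).prodMk (hasDerivAt_const p.1 p.2))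
  exact h.deriv

theorem ps_eq_fderiv_s14 {p : ℝ × ℝ} (hf : DifferentiableAt ℝ f p) :
    ps f p = fderiv ℝ f p (0, 1) := by
  have h := hf.hasFDerivAt.comp_hasDerivAt p.2 ((hasDerivAt_const p.2 p.1).prodMk (hasDerivAt_id p.2))
  exact h.deriv

theorem HasDerivAt.comp_graph {γ : ℝ → ℝ} {γ' a : ℝ} (hf : DifferentiableAt ℝ f (a, γ a))
    (hγ : HasDerivAt γ γ' a) :
    HasDerivAt (fun t => f (t, γ t)) (pt f (a, γ a) + γ' • ps f (a, γ a)) a := by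
  have h := hf.hasFDerivAt.comp_hasDerivAt a ((hasDerivAt_id a).prodMk hγ)
  have hsplit : ((1 : ℝ), γ') = ((1 : ℝ), (0 : ℝ)) + γ' • ((0 : ℝ), (1 : ℝ)) := by simp
  rwa [hsplit, map_add, map_smul, ← pt_eq_fderiv_s14 hf, ← ps_eq_fderiv_s14 hf] at h

theorem HasDerivAt.comp_vertical {γ : ℝ → ℝ} {γ' a b : ℝ} (hf : DifferentiableAt ℝ f (a, γ b))
    (hγ : HasDerivAt γ γ' b) :
    HasDerivAt (fun s => f (a, γ s)) (γ' • ps f (a, γ b)) b := by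
  have h := hf.hasFDerivAt.comp_hasDerivAt b ((hasDerivAt_const b a).prodMk hγ)
  have hsplit : ((0 : ℝ), γ') = γ' • ((0 : ℝ), (1 : ℝ)) := by simp
  rwa [hsplit, map_smul, ← ps_eq_fderiv_s14 hf] at h

end PartialDerivatives

section Lagrangian

variable {τ v ξ : ℝ × ℝ → ℝ}

theorem pt_pt_eq_of_pt_eq_comp (hξ : Differentiable ℝ ξ) (hv : Differentiable ℝ v)
    (hξt : ∀ p : ℝ × ℝ, pt ξ p = v (p.1, ξ p)) (p : ℝ × ℝ) :
    pt (pt ξ) p = pt v (p.1, ξ p) + v (p.1, ξ p) * ps v (p.1, ξ p) := by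
  have hline : HasDerivAt (fun t => ξ (t, p.2)) (v (p.1, ξ p)) p.1 :=
    hξt p ▸ hasDerivAt_pt (hξ p)
  have hcomp := hline.comp_graph (f := v) (hv _)
  rw [pt, funext fun t => hξt (t, p.2)]
  exact hcomp.deriv

theorem ps_ps_eq_of_ps_eq_comp (hξ : Differentiable ℝ ξ) (hτ : Differentiable ℝ τ)
    (hξy : ∀ p : ℝ × ℝ, ps ξ p = τ (p.1, ξ p)) (p : ℝ × ℝ) :
    ps (ps ξ) p = τ (p.1, ξ p) * ps τ (p.1, ξ p) := by
  have hline : HasDerivAt (fun s => ξ (p.1, s)) (τ (p.1, ξ p)) p.2 :=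
    hξy p ▸ hasDerivAt_ps (hξ p)
  have hcomp := hline.comp_vertical (f := τ) (a := p.1) (hτ _)
  rw [ps, funext fun s => hξy (p.1, s)]
  exact hcomp.deriv

end Lagrangian

theorem statement14_general
    (τ v : ℝ × ℝ → ℝ)
    (hτ : ContDiff ℝ 1 τ) (hv : ContDiff ℝ 1 v)
    (h2 : ∀ p : ℝ × ℝ, pt v p + v p * ps v p = τ p * ps τ p)
    (ξ : ℝ × ℝ → ℝ) (hξ : ContDiff ℝ 2 ξ)
    (hξy : ∀ p : ℝ × ℝ, ps ξ p = τ (p.1, ξ p))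
    (hξt : ∀ p : ℝ × ℝ, pt ξ p = v (p.1, ξ p)) :
    ∀ p : ℝ × ℝ, pt (pt ξ) p = ps (ps ξ) p := by
  intro p
  have hξd : Differentiable ℝ ξ := hξ.differentiable two_ne_zero
  rw [pt_pt_eq_of_pt_eq_comp hξd (hv.differentiable one_ne_zero) hξt,
    ps_ps_eq_of_ps_eq_comp hξd (hτ.differentiable one_ne_zero) hξy]
  exact h2 _

/-- The Lagrangian change of coordinates `ξ`, defined by `∂_yξ = τ(t, ξ)` and
`∂ₜξ = v(t, ξ)`, satisfies the linear wave equation `∂ₜₜξ = ∂_yyξ`. -/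
theorem statement14 (d : ℕ) (hd : 1 ≤ d) (δ : ℝ) (hδ : 0 < δ)
    (τ v : ℝ × ℝ → ℝ) (η ζ : ℝ × ℝ → EuclideanSpace ℝ (Fin d))
    (hτ : ContDiff ℝ 1 τ) (hv : ContDiff ℝ 1 v)
    (hη : ContDiff ℝ 1 η) (hζ : ContDiff ℝ 1 ζ)
    (h1 : ∀ p : ℝ × ℝ, pt τ p + v p * ps τ p = τ p * ps v p)
    (h2 : ∀ p : ℝ × ℝ, pt v p + v p * ps v p = τ p * ps τ p)
    (h3 : ∀ p : ℝ × ℝ, pt η p + v p • ps η p = -(τ p) • ps ζ p)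
    (h4 : ∀ p : ℝ × ℝ, pt ζ p + v p • ps ζ p = -(τ p) • ps η p)
    (hτδ : ∀ p : ℝ × ℝ, δ ≤ τ p)
    (ξ : ℝ × ℝ → ℝ) (hξ : ContDiff ℝ 2 ξ)
    (hξy : ∀ p : ℝ × ℝ, ps ξ p = τ (p.1, ξ p))
    (hξt : ∀ p : ℝ × ℝ, pt ξ p = v (p.1, ξ p)) :
    ∀ p : ℝ × ℝ, pt (pt ξ) p = ps (ps ξ) p :=
  statement14_general τ v hτ hv h2 ξ hξ hξy hξt
end
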